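/- Let Q₁, Q₂ be computable probability measures on Ω and let P = p₁Q₁ + p₂Q₂ with computable rationals 0 < p₁, p₂, p₁ + p₂ = 1. Then R^P = R^{Q₁} ∪ R^{Q₂}, i.e., a sequence is ML-random for the mixture iff it is ML-random for at least one component. -/

import Mathlib

open MeasureTheory Filter Set

abbrev BSeq : Type := ℕ → Bool
abbrev Str := List Bool

/-- Cylinder set of a finite binary string. -/
def cyl (s : Str) : Set BSeq := {x | ∀ i, i < s.length → x i = s.getD i false}

/-- The length-`n` prefix of an infinite sequence, as a finite string. -/
def prefixOf (y : BSeq) (n : ℕ) : Str := (List.range n).map y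

/-- Conditional probability on the first coordinate given the cylinder `Δ(s)`
on the second coordinate. -/
noncomputable def condCyl (P : Measure (BSeq × BSeq)) (s : Str) : Measure BSeq :=
  (P (Set.univ ×ˢ cyl s))⁻¹ • ((P.restrict (Set.univ ×ˢ cyl s)).map Prod.fst)

/-- The `n`-th open set of a test. -/
def openOf (U : Set (Str × ℕ)) (n : ℕ) : Set BSeq := ⋃ s ∈ {s | (s, n) ∈ U}, cyl s

/-- Martin-Löf test for a measure on `BSeq`. -/
def MLTest (μ : Measure BSeq) (U : Set (Str × ℕ)) : Prop :=
  REPred (· ∈ U) ∧ (∀ n, openOf U (n + 1) ⊆ openOf U n) ∧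
    ∀ n, μ (openOf U n) < (2⁻¹ : ENNReal) ^ n

/-- Martin-Löf randomness for a measure on `BSeq`. -/
def MLRandom (μ : Measure BSeq) (x : BSeq) : Prop :=
  ∀ U, MLTest μ U → ∃ n, x ∉ openOf U n

def open2 (U : Set (Str × Str × ℕ)) (n : ℕ) : Set (BSeq × BSeq) :=
  ⋃ p ∈ {p : Str × Str | (p.1, p.2, n) ∈ U}, cyl p.1 ×ˢ cyl p.2

/-- Martin-Löf test on the product space. -/
def MLTest2 (P : Measure (BSeq × BSeq)) (U : Set (Str × Str × ℕ)) : Prop :=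
  REPred (· ∈ U) ∧ (∀ n, open2 U (n + 1) ⊆ open2 U n) ∧
    ∀ n, P (open2 U n) < (2⁻¹ : ENNReal) ^ n

/-- Martin-Löf randomness on the product space. -/
def MLRandom2 (P : Measure (BSeq × BSeq)) (z : BSeq × BSeq) : Prop :=
  ∀ U, MLTest2 P U → ∃ n, z ∉ open2 U n

/-- `U` is recursively enumerable with oracle `y`. -/
def REIn (y : BSeq) (U : Set (Str × ℕ)) : Prop :=
  ∃ V : Set (Str × ℕ × Str), REPred (· ∈ V) ∧
    ∀ s n, (s, n) ∈ U ↔ ∃ m, (s, n, prefixOf y m) ∈ V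

/-- Martin-Löf test relative to oracle `y`. -/
def MLTestO (μ : Measure BSeq) (y : BSeq) (U : Set (Str × ℕ)) : Prop :=
  REIn y U ∧ (∀ n, openOf U (n + 1) ⊆ openOf U n) ∧
    ∀ n, μ (openOf U n) < (2⁻¹ : ENNReal) ^ n

/-- Martin-Löf randomness relative to oracle `y`. -/
def MLRandomO (μ : Measure BSeq) (y : BSeq) (x : BSeq) : Prop :=
  ∀ U, MLTestO μ y U → ∃ n, x ∉ openOf U n

/-- Computability of a probability measure on `BSeq`. -/
def ComputableMeasure (μ : Measure BSeq) : Prop :=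
  ∃ A : Str × ℕ → ℚ, Computable A ∧
    ∀ s k, |(μ (cyl s)).toReal - (A (s, k) : ℝ)| < 1 / (k + 1)

/-- Computability of a probability measure on the product space. -/
def ComputableMeasure2 (P : Measure (BSeq × BSeq)) : Prop :=
  ∃ A : Str × Str × ℕ → ℚ, Computable A ∧
    ∀ s t k, |(P (cyl s ×ˢ cyl t)).toReal - (A (s, t, k) : ℝ)| < 1 / (k + 1)

/-- Computability of a measure with oracle `y`: a machine reading finitely many
bits of `y` produces arbitrarily good rational approximations. -/
def OracleComputableMeasure (μ : Measure BSeq) (y : BSeq) : Prop :=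
  ∃ A : Str × ℕ × Str → Option ℚ, Computable A ∧
    ∀ s k, (∃ m, (A (s, k, prefixOf y m)).isSome) ∧
      ∀ m q, A (s, k, prefixOf y m) = some q →
        |(μ (cyl s)).toReal - (q : ℝ)| < 1 / (k + 1)

/-- `Q` is the conditional probability `P(·∣y∞)`, i.e. the limit of the
conditional probabilities along finite prefixes of `y∞`. -/
def CondAt (P : Measure (BSeq × BSeq)) (y : BSeq) (Q : Measure BSeq) : Prop :=
  IsProbabilityMeasure Q ∧
    ∀ s, Tendsto (fun n => condCyl P (prefixOf y n) (cyl s)) atTop (nhds (Q (cyl s)))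

/-!
A Martin-Löf test for `c • μ` with `2⁻¹ ^ k ≤ c` becomes a test for `μ` once its first `k`
levels are dropped, so `μ`-randomness implies `c • μ`-randomness; and randomness is monotone
in the measure, since a test for a measure is a test for every smaller one. Hence
`R^{Qᵢ} ⊆ R^P`. Conversely, if `x` fails a `Q₁`-test `U` and a `Q₂`-test `W`, then the sets
`U_{n+1} ∩ W_{n+1}` form a `(Q₁ + Q₂)`-test, hence a `P`-test because `P ≤ Q₁ + Q₂`, and `x`
fails it as well.
-/

theorem REPred.comp {α β : Type*} [Primcodable α] [Primcodable β] {p : β → Prop}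
    (hp : REPred p) {f : α → β} (hf : Computable f) : REPred fun a => p (f a) :=
  Partrec.comp hp hf

theorem REPred.and {α : Type*} [Primcodable α] {p q : α → Prop} (hp : REPred p)
    (hq : REPred q) : REPred fun a => p a ∧ q a := by
  have hq' : Partrec₂ fun (a : α) (_ : Unit) => Part.assert (q a) fun _ => Part.some () :=
    Partrec.comp hq Computable.fst
  refine (Partrec.bind hp hq').of_eq fun a => Part.ext fun x => ?_
  simp only [Part.mem_bind_iff, Part.mem_assert_iff, Part.mem_some_iff]
  tauto

open Nat.Partrec.Code in
/-- Dovetailing: search over pairs (step bound, witness) for a halting computation. -/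
theorem REPred.exists {α β : Type*} [Primcodable α] [Primcodable β] {p : α × β → Prop}
    (hp : REPred p) : REPred fun a => ∃ b, p (a, b) := by
  obtain ⟨c, hc⟩ := exists_code.1 hp
  have hdom : ∀ (a : α) (b : β), (eval c (Encodable.encode (a, b))).Dom ↔ p (a, b) := by
    intro a b
    rw [hc]
    simp [Encodable.encodek, Part.assert]
  set F : α → ℕ → Option ℕ := fun a m =>
    (Encodable.decode (α := β) m.unpair.2).bind fun b =>
      evaln m.unpair.1 c (Encodable.encode (a, b)) with hF
  have hFc : Computable₂ F := by
    have hdecode : Primrec fun x : α × ℕ => Encodable.decode (α := β) x.2.unpair.2 :=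
      Primrec.decode.comp (Primrec.snd.comp (Primrec.unpair.comp Primrec.snd))
    have hevaln : Primrec₂ fun (x : α × ℕ) (b : β) =>
        evaln x.2.unpair.1 c (Encodable.encode (x.1, b)) :=
      primrec_evaln.comp
        (((Primrec.fst.comp (Primrec.unpair.comp (Primrec.snd.comp Primrec.fst))).pair
          (Primrec.const c)).pair
          (Primrec.encode.comp ((Primrec.fst.comp Primrec.fst).pair Primrec.snd)))
    exact (Primrec.option_bind hdecode hevaln).to_comp.to₂
  refine (Partrec.rfindOpt hFc).dom_re.of_eq fun a => ?_
  rw [Nat.rfindOpt_dom]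
  constructor
  · rintro ⟨m, x, hx⟩
    simp only [hF, Option.mem_def, Option.bind_eq_some_iff] at hx
    obtain ⟨b, -, hb⟩ := hx
    exact ⟨b, (hdom a b).1 (Part.dom_iff_mem.2 ⟨x, evaln_sound hb⟩)⟩
  · rintro ⟨b, hb⟩
    obtain ⟨x, hx⟩ := Part.dom_iff_mem.1 ((hdom a b).2 hb)
    obtain ⟨k, hk⟩ := evaln_complete.1 hx
    exact ⟨Nat.pair k (Encodable.encode b), x, by simpa [hF, Encodable.encodek] using hk⟩

theorem cyl_subset_cyl_take (u : Str) (i : ℕ) : cyl u ⊆ cyl (u.take i) := by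
  intro x hx j hj
  simp only [List.length_take, lt_min_iff] at hj
  rw [List.getD_eq_getElem _ _ (by simp [hj.1, hj.2]), List.getElem_take,
    ← List.getD_eq_getElem _ _ hj.2]
  exact hx j hj.2

theorem mem_cyl_prefixOf (y : BSeq) (n : ℕ) : y ∈ cyl (prefixOf y n) := by
  intro i hi
  simp only [prefixOf, List.length_map, List.length_range] at hi
  rw [List.getD_eq_getElem _ _ (by simpa [prefixOf] using hi)]
  simp [prefixOf]

theorem prefixOf_take (y : BSeq) {m n : ℕ} (h : m ≤ n) :
    (prefixOf y n).take m = prefixOf y m := by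
  simp [prefixOf, ← List.map_take, List.take_range, Nat.min_eq_left h]

theorem prefixOf_length_eq_of_mem_cyl {y : BSeq} {s : Str} (h : y ∈ cyl s) :
    prefixOf y s.length = s := by
  apply List.ext_getElem
  · simp [prefixOf]
  · intro i _ hi
    simp only [prefixOf, List.getElem_map, List.getElem_range]
    rw [h i hi, List.getD_eq_getElem _ _ hi]

theorem mem_openOf {U : Set (Str × ℕ)} {n : ℕ} {x : BSeq} :
    x ∈ openOf U n ↔ ∃ s, (s, n) ∈ U ∧ x ∈ cyl s := by
  simp [openOf]

def shiftTest (U : Set (Str × ℕ)) (k : ℕ) : Set (Str × ℕ) := {q | (q.1, k + q.2) ∈ U}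

theorem openOf_shiftTest (U : Set (Str × ℕ)) (k n : ℕ) :
    openOf (shiftTest U k) n = openOf U (k + n) := rfl

theorem REPred.mem_shiftTest {U : Set (Str × ℕ)} (hU : REPred (· ∈ U)) (k : ℕ) :
    REPred (· ∈ shiftTest U k) :=
  hU.comp (Primrec.fst.pair (Primrec.nat_add.comp (Primrec.const k) Primrec.snd)).to_comp

def interTest (U W : Set (Str × ℕ)) : Set (Str × ℕ) :=
  {q | ∃ ij : ℕ × ℕ, (q.1.take ij.1, q.2) ∈ U ∧ (q.1.take ij.2, q.2) ∈ W}

theorem openOf_interTest (U W : Set (Str × ℕ)) (n : ℕ) :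
    openOf (interTest U W) n = openOf U n ∩ openOf W n := by
  ext y
  simp only [Set.mem_inter_iff, mem_openOf]
  constructor
  · rintro ⟨u, ⟨⟨i, j⟩, hi, hj⟩, hyu⟩
    exact ⟨⟨_, hi, cyl_subset_cyl_take u i hyu⟩, ⟨_, hj, cyl_subset_cyl_take u j hyu⟩⟩
  · rintro ⟨⟨s, hs, hys⟩, ⟨t, ht, hyt⟩⟩
    refine ⟨prefixOf y (max s.length t.length), ⟨(s.length, t.length), ?_, ?_⟩,
      mem_cyl_prefixOf y _⟩
    · rwa [prefixOf_take y (le_max_left _ _), prefixOf_length_eq_of_mem_cyl hys]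
    · rwa [prefixOf_take y (le_max_right _ _), prefixOf_length_eq_of_mem_cyl hyt]

theorem REPred.mem_interTest {U W : Set (Str × ℕ)} (hU : REPred (· ∈ U))
    (hW : REPred (· ∈ W)) : REPred (· ∈ interTest U W) := by
  have htake₁ : Computable fun q : (Str × ℕ) × ℕ × ℕ => (q.1.1.take q.2.1, q.1.2) :=
    ((Primrec.list_take.comp (Primrec.fst.comp Primrec.snd) (Primrec.fst.comp Primrec.fst)).pair
      (Primrec.snd.comp Primrec.fst)).to_comp
  have htake₂ : Computable fun q : (Str × ℕ) × ℕ × ℕ => (q.1.1.take q.2.2, q.1.2) :=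
    ((Primrec.list_take.comp (Primrec.snd.comp Primrec.snd) (Primrec.fst.comp Primrec.fst)).pair
      (Primrec.snd.comp Primrec.fst)).to_comp
  exact REPred.exists ((hU.comp htake₁).and (hW.comp htake₂))

namespace MLTest

variable {μ ν : Measure BSeq} {U W : Set (Str × ℕ)}

theorem mono (hU : MLTest μ U) (h : ν ≤ μ) : MLTest ν U :=
  ⟨hU.1, hU.2.1, fun n => (h _).trans_lt (hU.2.2 n)⟩

theorem shiftTest_of_smul {c : ENNReal} {k : ℕ} (hU : MLTest (c • μ) U)
    (hk : (2⁻¹ : ENNReal) ^ k ≤ c) : MLTest μ (shiftTest U k) := by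
  refine ⟨hU.1.mem_shiftTest k, fun n => hU.2.1 (k + n), fun n => ?_⟩
  refine lt_of_mul_lt_mul_left' (a := c) ?_
  calc c * μ (openOf U (k + n)) < (2⁻¹ : ENNReal) ^ (k + n) := hU.2.2 (k + n)
    _ = 2⁻¹ ^ k * 2⁻¹ ^ n := pow_add _ _ _
    _ ≤ c * 2⁻¹ ^ n := mul_le_mul_left hk _

theorem inter (hU : MLTest μ U) (hW : MLTest ν W) :
    MLTest (μ + ν) (interTest (shiftTest U 1) (shiftTest W 1)) := by
  have hopen : ∀ n, openOf (interTest (shiftTest U 1) (shiftTest W 1)) n =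
      openOf U (1 + n) ∩ openOf W (1 + n) := fun n => by
    rw [openOf_interTest, openOf_shiftTest, openOf_shiftTest]
  refine ⟨(hU.1.mem_shiftTest 1).mem_interTest (hW.1.mem_shiftTest 1), fun n => ?_,
    fun n => ?_⟩
  · rw [hopen, hopen]
    exact Set.inter_subset_inter (hU.2.1 (1 + n)) (hW.2.1 (1 + n))
  · rw [hopen, Measure.add_apply]
    calc μ (openOf U (1 + n) ∩ openOf W (1 + n)) + ν (openOf U (1 + n) ∩ openOf W (1 + n))
        ≤ μ (openOf U (1 + n)) + ν (openOf W (1 + n)) :=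
          add_le_add (measure_mono Set.inter_subset_left) (measure_mono Set.inter_subset_right)
      _ < 2⁻¹ ^ (1 + n) + 2⁻¹ ^ (1 + n) := ENNReal.add_lt_add (hU.2.2 _) (hW.2.2 _)
      _ = 2⁻¹ ^ n := by rw [← two_mul, pow_add, ← mul_assoc, pow_one, ENNReal.mul_inv_cancel
          two_ne_zero ENNReal.ofNat_ne_top, one_mul]

end MLTest

namespace MLRandom

variable {μ ν : Measure BSeq} {x : BSeq}

theorem mono (h : ν ≤ μ) (hx : MLRandom ν x) : MLRandom μ x :=
  fun U hU => hx U (hU.mono h)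

theorem smul {c : ENNReal} (hc : c ≠ 0) (hx : MLRandom μ x) : MLRandom (c • μ) x := by
  intro U hU
  obtain ⟨k, hk⟩ := ENNReal.exists_inv_two_pow_lt hc
  obtain ⟨n, hn⟩ := hx _ (hU.shiftTest_of_smul hk.le)
  exact ⟨k + n, hn⟩

theorem or_of_add (hx : MLRandom (μ + ν) x) : MLRandom μ x ∨ MLRandom ν x := by
  by_contra! h
  simp only [MLRandom, not_forall, not_exists, not_not, exists_prop] at h
  obtain ⟨⟨U, hU, hxU⟩, ⟨W, hW, hxW⟩⟩ := h
  obtain ⟨n, hn⟩ := hx _ (hU.inter hW)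
  simp only [openOf_interTest, openOf_shiftTest] at hn
  exact hn ⟨hxU _, hxW _⟩

end MLRandom

theorem MeasureTheory.Measure.smul_le_self {α : Type*} [MeasurableSpace α] (μ : Measure α)
    {c : ENNReal} (hc : c ≤ 1) : c • μ ≤ μ :=
  fun s => by simpa using mul_le_of_le_one_left zero_le hc

theorem random_mixture_of_two_general
    (Q₁ Q₂ : Measure BSeq)
    (p₁ p₂ : ℚ) (hp₁ : 0 < p₁) (hp₂ : 0 < p₂) (hsum : p₁ + p₂ = 1) :
    ∀ x : BSeq,
      MLRandom (ENNReal.ofReal (p₁ : ℝ) • Q₁ + ENNReal.ofReal (p₂ : ℝ) • Q₂) x ↔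
        MLRandom Q₁ x ∨ MLRandom Q₂ x := by
  intro x
  have hc₁ : ENNReal.ofReal (p₁ : ℝ) ≤ 1 := ENNReal.ofReal_le_one.2 (by norm_cast; linarith)
  have hc₂ : ENNReal.ofReal (p₂ : ℝ) ≤ 1 := ENNReal.ofReal_le_one.2 (by norm_cast; linarith)
  constructor
  · intro hx
    exact (hx.mono (add_le_add (Q₁.smul_le_self hc₁) (Q₂.smul_le_self hc₂))).or_of_add
  · rintro (hx | hx)
    · exact (hx.smul (ENNReal.ofReal_pos.2 (by exact_mod_cast hp₁)).ne').mono
        (Measure.le_add_right le_rfl)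
    · exact (hx.smul (ENNReal.ofReal_pos.2 (by exact_mod_cast hp₂)).ne').mono
        (Measure.le_add_left le_rfl)

/-- randomness for a finite Bayesian mixture of two computable
probability measures. -/
theorem random_mixture_of_two
    (Q₁ Q₂ : Measure BSeq) [IsProbabilityMeasure Q₁] [IsProbabilityMeasure Q₂]
    (hQ₁ : ComputableMeasure Q₁) (hQ₂ : ComputableMeasure Q₂)
    (p₁ p₂ : ℚ) (hp₁ : 0 < p₁) (hp₂ : 0 < p₂) (hsum : p₁ + p₂ = 1) :
    ∀ x : BSeq,
      MLRandom (ENNReal.ofReal (p₁ : ℝ) • Q₁ + ENNReal.ofReal (p₂ : ℝ) • Q₂) x ↔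
        MLRandom Q₁ x ∨ MLRandom Q₂ x :=
  random_mixture_of_two_general Q₁ Q₂ p₁ p₂ hp₁ hp₂ hsum
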